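/- arXiv:2411.12154 — 8 statements merged into one kernel-verified Lean document; each statement's English description precedes it below -/
import Mathlib

section
/- Let g : ℝⁿ → ℝ be a differentiable strongly convex function such that the sublevel set 𝒜 = {x ∈ ℝⁿ : g(x) ≤ 0} is compact and nonempty, and suppose there exists x₀ ∈ ℝⁿ with g(x₀) < 0 (Slater's condition). Then for every θ ∈ ℝⁿ with θ ≠ 0, the maximizer a*(θ) of the linear functional a ↦ ⟨θ, a⟩ over 𝒜 exists and is unique, satisfies g(a*(θ)) = 0, and there exists a scalar ω*(θ) > 0 such that ∇g(a*(θ)) = ω*(θ)·θ. -/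
/-!
A maximizer `a` exists by compactness. It cannot satisfy `g a < 0`: such a point is interior
to `{g ≤ 0}`, where a nonzero linear functional has no local maximum. Strict convexity then gives
uniqueness, since the midpoint of two maximizers is again a maximizer but has `g < 0`. Finally,
every direction `v` with `⟪∇g a, v⟫ < 0` points into `{g ≤ 0}`, so `⟪θ, v⟫ ≤ 0` by first-order
optimality; as Slater's point and the gradient inequality make `∇g a ≠ 0`, this forces `θ` to be
a nonnegative, hence positive, multiple of `∇g a`.
-/

open RealInnerProductSpace Topology Filter Set

section InnerProductSpace

variable {E : Type*} [NormedAddCommGroup E] [InnerProductSpace ℝ E]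

lemma eq_zero_of_isMaxOn_inner_of_mem_interior {θ a : E} {s : Set E}
    (hmax : IsMaxOn (fun x => ⟪θ, x⟫) s a) (ha : a ∈ interior s) : θ = 0 := by
  have hzero := (hmax.isLocalMax (mem_interior_iff_mem_nhds.mp ha)).hasFDerivAt_eq_zero
    (innerSL ℝ θ).hasFDerivAt
  simpa using congrArg (fun L : StrongDual ℝ E => L θ) hzero

lemma not_isMaxOn_inner_sublevel_of_neg {g : E → ℝ} (hg : Continuous g) {θ a : E}
    (hθ : θ ≠ 0) (ha : g a < 0) : ¬ IsMaxOn (fun x => ⟪θ, x⟫) {x | g x ≤ 0} a := fun hmax =>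
  hθ <| eq_zero_of_isMaxOn_inner_of_mem_interior hmax <|
    (isOpen_lt hg continuous_const).subset_interior_iff.mpr
      (ofPred_subset_ofPred.mpr fun _ => le_of_lt) ha

lemma eq_zero_of_isMaxOn_inner_sublevel {g : E → ℝ} (hg : Continuous g) {θ a : E}
    (hθ : θ ≠ 0) (ha : g a ≤ 0) (hmax : IsMaxOn (fun x => ⟪θ, x⟫) {x | g x ≤ 0} a) : g a = 0 :=
  ha.eq_or_lt.resolve_right fun hlt => not_isMaxOn_inner_sublevel_of_neg hg hθ hlt hmax

lemma eq_of_isMaxOn_inner_sublevel {g : E → ℝ} (hg : Continuous g)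
    (hsc : StrictConvexOn ℝ univ g) {θ a b : E} (hθ : θ ≠ 0) (ha : g a ≤ 0) (hb : g b ≤ 0)
    (hmaxa : IsMaxOn (fun x => ⟪θ, x⟫) {x | g x ≤ 0} a)
    (hmaxb : IsMaxOn (fun x => ⟪θ, x⟫) {x | g x ≤ 0} b) : a = b := by
  by_contra hab
  have heq : ⟪θ, a⟫ = ⟪θ, b⟫ := le_antisymm (hmaxb ha) (hmaxa hb)
  set m : E := (1 / 2 : ℝ) • a + (1 / 2 : ℝ) • b
  have hm : g m < 0 := by
    have := hsc.2 (mem_univ a) (mem_univ b) hab (by norm_num : (0 : ℝ) < 1 / 2)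
      (by norm_num : (0 : ℝ) < 1 / 2) (by norm_num)
    simp only [smul_eq_mul] at this
    linarith
  refine not_isMaxOn_inner_sublevel_of_neg hg hθ hm fun x hx => ?_
  have : ⟪θ, m⟫ = ⟪θ, a⟫ := by
    simp only [m, inner_add_right, real_inner_smul_right, ← heq]; ring
  simpa [this] using hmaxa hx

lemma exists_nonneg_smul_of_inner_neg_imp_nonpos {G θ : E} (hG : G ≠ 0)
    (h : ∀ v, ⟪G, v⟫ < 0 → ⟪θ, v⟫ ≤ 0) : ∃ c : ℝ, 0 ≤ c ∧ θ = c • G := by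
  have hGG : 0 < ⟪G, G⟫ := real_inner_self_pos.mpr hG
  have hθG : 0 ≤ ⟪θ, G⟫ := by
    simpa [inner_neg_right] using h (-G) (by simpa [inner_neg_right] using hGG)
  set c : ℝ := ⟪θ, G⟫ / ⟪G, G⟫
  set w : E := θ - c • G
  have hGw : ⟪G, w⟫ = 0 := by
    simp only [w, c, inner_sub_right, real_inner_smul_right, real_inner_comm θ G]
    field_simp; ring
  have hθw : ⟪θ, w⟫ = ⟪w, w⟫ := by
    simp only [w, inner_sub_left, real_inner_smul_left, hGw]; ring
  -- testing `h` on `w - ε • G` gives `‖w‖² ≤ ε ⟪θ, G⟫` for every `ε > 0`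
  have hw : ⟪w, w⟫ ≤ 0 := by
    refine ge_of_tendsto (f := fun ε : ℝ => ε * ⟪θ, G⟫) (x := 𝓝[>] 0) ?_ ?_
    · simpa using
        (tendsto_id.mul_const ⟪θ, G⟫).mono_left (nhdsWithin_le_nhds (a := (0 : ℝ)))
    · filter_upwards [self_mem_nhdsWithin] with ε (hε : 0 < ε)
      have := h (w - ε • G) (by
        rw [inner_sub_right, real_inner_smul_right, hGw]; nlinarith)
      rw [inner_sub_right, real_inner_smul_right, hθw] at this
      linarith
  refine ⟨c, div_nonneg hθG hGG.le, ?_⟩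
  rw [← sub_eq_zero, ← inner_self_eq_zero (𝕜 := ℝ)]
  exact le_antisymm hw real_inner_self_nonneg

variable [CompleteSpace E] {f : E → ℝ} {f' x : E}

lemma HasGradientAt.hasDerivAt_comp_add_smul (hf : HasGradientAt f f' x) (v : E) :
    HasDerivAt (fun t : ℝ => f (x + t • v)) ⟪f', v⟫ 0 := by
  have hline : HasDerivAt (fun t : ℝ => x + t • v) v 0 := by
    simpa using ((hasDerivAt_id (0 : ℝ)).smul_const v).const_add x
  have hf0 : HasFDerivAt f (InnerProductSpace.toDual ℝ E f') (x + (0 : ℝ) • v) := by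
    simpa using hf.hasFDerivAt
  exact hf0.comp_hasDerivAt 0 hline

lemma HasGradientAt.eventually_lt_of_inner_neg (hf : HasGradientAt f f' x) {v : E}
    (hv : ⟪f', v⟫ < 0) : ∀ᶠ t in 𝓝[>] (0 : ℝ), f (x + t • v) < f x := by
  have hslope := hasDerivAt_iff_tendsto_slope.mp (hf.hasDerivAt_comp_add_smul v)
  filter_upwards [(hslope.eventually_lt_const hv).filter_mono (nhdsGT_le_nhdsNE 0),
    self_mem_nhdsWithin] with t hneg (ht : 0 < t)
  rw [slope_def_field, zero_smul, add_zero, sub_zero, div_neg_iff] at hneg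
  rcases hneg with ⟨-, h⟩ | ⟨h, -⟩ <;> linarith

lemma ConvexOn.inner_gradient_le_sub {s : Set E} (hconv : ConvexOn ℝ s f) (hx : x ∈ s) {y : E}
    (hy : y ∈ s) (hf : HasGradientAt f f' x) : ⟪f', y - x⟫ ≤ f y - f x := by
  have hline : ∀ t : ℝ, AffineMap.lineMap x y t = x + t • (y - x) := fun t => by
    rw [AffineMap.lineMap_apply_module', add_comm]
  have hφ : ConvexOn ℝ (Icc 0 1) (fun t : ℝ => f (x + t • (y - x))) := by
    refine ((hconv.comp_affineMap (AffineMap.lineMap x y)).subset (fun t ht => ?_)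
      (convex_Icc 0 1)).congr fun t _ => by simp [hline]
    exact hconv.1.lineMap_mem hx hy ht
  simpa [slope_def_field] using hφ.le_slope_of_hasDerivAt (by simp) (by simp) zero_lt_one
    (hf.hasDerivAt_comp_add_smul (y - x))

lemma exists_nonneg_smul_gradient_of_isMaxOn_inner {g : E → ℝ} (hconv : ConvexOn ℝ univ g)
    {θ a G x₀ : E} (hgrad : HasGradientAt g G a) (ha : g a = 0) (hx₀ : g x₀ < 0)
    (hmax : IsMaxOn (fun x => ⟪θ, x⟫) {x | g x ≤ 0} a) : ∃ c : ℝ, 0 ≤ c ∧ θ = c • G := by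
  have hG : G ≠ 0 := by
    rintro rfl
    have := hconv.inner_gradient_le_sub (mem_univ a) (mem_univ x₀) hgrad
    rw [inner_zero_left] at this
    linarith
  refine exists_nonneg_smul_of_inner_neg_imp_nonpos hG fun v hv => ?_
  have hcone : v ∈ posTangentConeAt {x | g x ≤ 0} a :=
    mem_posTangentConeAt_of_frequently_mem <|
      ((hgrad.eventually_lt_of_inner_neg hv).mono fun t ht => (ha ▸ ht).le).frequently
  exact hmax.localize.hasFDerivWithinAt_nonpos
    (innerSL ℝ θ).hasFDerivAt.hasFDerivWithinAt hcone

end InnerProductSpace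

/-- For a differentiable strongly convex `g` whose zero-sublevel set
`𝒜 = {x | g x ≤ 0}` is compact and nonempty and satisfies Slater's condition, and for every
`θ ≠ 0`, the maximizer of `a ↦ ⟪θ, a⟫` over `𝒜` exists, is unique, lies on the boundary
`{g = 0}`, and the gradient of `g` there is a positive multiple of `θ`. -/
theorem exists_unique_linear_maximizer_on_sublevel {n : ℕ}
    (g : EuclideanSpace ℝ (Fin n) → ℝ) (hg : Differentiable ℝ g)
    (κ : ℝ) (hκ : 0 < κ) (hsc : StrongConvexOn Set.univ κ g)
    (hcompact : IsCompact {x : EuclideanSpace ℝ (Fin n) | g x ≤ 0})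
    (hne : {x : EuclideanSpace ℝ (Fin n) | g x ≤ 0}.Nonempty)
    (x₀ : EuclideanSpace ℝ (Fin n)) (hx₀ : g x₀ < 0)
    (θ : EuclideanSpace ℝ (Fin n)) (hθ : θ ≠ 0) :
    ∃ a : EuclideanSpace ℝ (Fin n),
      (g a ≤ 0 ∧ ∀ b, g b ≤ 0 → ⟪θ, b⟫ ≤ ⟪θ, a⟫) ∧
      (∀ a', (g a' ≤ 0 ∧ ∀ b, g b ≤ 0 → ⟪θ, b⟫ ≤ ⟪θ, a'⟫) → a' = a) ∧
      g a = 0 ∧ ∃ ω : ℝ, 0 < ω ∧ gradient g a = ω • θ := by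
  have hstrict : StrictConvexOn ℝ univ g := hsc.strictConvexOn hκ
  obtain ⟨a, ha, hmax⟩ := hcompact.exists_isMaxOn hne (innerSL ℝ θ).continuous.continuousOn
  have hga : g a = 0 := eq_zero_of_isMaxOn_inner_sublevel hg.continuous hθ ha hmax
  obtain ⟨c, hc, hθc⟩ := exists_nonneg_smul_gradient_of_isMaxOn_inner hstrict.convexOn
    (hg a).hasGradientAt hga hx₀ hmax
  have hc0 : c ≠ 0 := by rintro rfl; exact hθ (by simpa using hθc)
  refine ⟨a, ⟨ha, fun b hb => hmax hb⟩, fun a' ⟨ha', hmax'⟩ => ?_, hga,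
    c⁻¹, inv_pos.mpr (hc.lt_of_ne' hc0), ?_⟩
  · exact eq_of_isMaxOn_inner_sublevel hg.continuous hstrict hθ ha' ha
      (fun b hb => hmax' b hb) hmax
  · rw [hθc, smul_smul, inv_mul_cancel₀ hc0, one_smul]
end

section
/- Let θ ∈ ℝⁿ satisfy 0 < θ_min ≤ ‖θ‖ ≤ θ_max, and suppose the gradient of g at a*(θ) is a positive multiple of θ. Assume that on the closed ball B(a*(θ), m') = {y : ‖y − a*(θ)‖ ≤ m'} the bounds ∇_min ≤ ‖∇g(y)‖ ≤ ∇_max and λ^Δ_min·I ⪯ ∇²g(y) ⪯ λ^Δ_max·I hold, where 0 < ∇_min ≤ ∇_max and 0 < λ^Δ_min ≤ λ^Δ_max, and set φ_g = ∇_min/λ^Δ_max. Then for every x ∈ ℝⁿ with g(x) = 0 and ‖x − a*(θ)‖ ≤ m', one has (θ_min λ^Δ_min/(2∇_max))·‖a*(θ) − x‖² ≤ ⟨θ, a*(θ)⟩ − ⟨θ, x⟩ ≤ (θ_max/(2φ_g))·‖a*(θ) − x‖². -/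
/-!
Along the segment from `a*(θ)` to `x`, `t ↦ g (a*(θ) + t (x - a*(θ)))` vanishes at both ends and
has derivative `-ω ⟪θ, a*(θ) - x⟫` at `0`, so Taylor's formula with Lagrange remainder gives
`2 ω ⟪θ, a*(θ) - x⟫ = ⟪∇²g(y) d, d⟫` for some `y` on the segment, `d = x - a*(θ)`. The Hessian
bounds at `y` sandwich the right side between `λ^Δ_min ‖d‖²` and `λ^Δ_max ‖d‖²`, and the gradient
bounds at `a*(θ)`, where `‖∇g‖ = ω ‖θ‖`, bound `1 / ω` below by `‖θ‖ / ∇_max` and above by `‖θ‖ / ∇_min`.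
-/

open RealInnerProductSpace Set

theorem exists_taylor_lagrange_two_unitInterval {f f' f'' : ℝ → ℝ}
    (hf : ∀ t, HasDerivAt f (f' t) t) (hf' : ∀ t, HasDerivAt f' (f'' t) t) :
    ∃ c ∈ Ioo (0 : ℝ) 1, f 1 - f 0 - f' 0 = f'' c / 2 := by
  set K := f 1 - f 0 - f' 0
  -- `φ` vanishes at `0` and `1`, so Rolle gives a zero `a` of `φ'`; since `φ' 0 = 0` too,
  -- Rolle on `[0, a]` gives `φ'' c = f'' c - 2 K = 0`.
  set φ : ℝ → ℝ := fun t => f t - f 0 - t * f' 0 - t ^ 2 * K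
  set φ' : ℝ → ℝ := fun t => f' t - f' 0 - 2 * t * K
  have hφ : ∀ t, HasDerivAt φ (φ' t) t := fun t =>
    ((((hf t).sub_const (f 0)).sub ((hasDerivAt_id' t).mul_const (f' 0))).sub
      ((hasDerivAt_pow 2 t).mul_const K)).congr_deriv (by simp [φ'])
  have hφ' : ∀ t, HasDerivAt φ' (f'' t - 2 * K) t := fun t =>
    (((hf' t).sub_const (f' 0)).sub (((hasDerivAt_id' t).const_mul 2).mul_const K)).congr_deriv
      (by ring)
  obtain ⟨a, ha, hφ'a⟩ := exists_hasDerivAt_eq_zero one_pos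
    (fun t _ => (hφ t).continuousAt.continuousWithinAt) (by simp [φ, K]) (fun t _ => hφ t)
  obtain ⟨c, hc, hc0⟩ := exists_hasDerivAt_eq_zero ha.1
    (fun t _ => (hφ' t).continuousAt.continuousWithinAt) (by simp [φ', hφ'a]) (fun t _ => hφ' t)
  exact ⟨c, ⟨hc.1, hc.2.trans ha.2⟩, by linarith⟩

section InnerProductSpace

variable {E : Type*} [NormedAddCommGroup E] [InnerProductSpace ℝ E] [CompleteSpace E]

theorem ContDiff.differentiable_gradient {g : E → ℝ} (hg : ContDiff ℝ 2 g) :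
    Differentiable ℝ (gradient g) :=
  ((InnerProductSpace.toDual ℝ E).symm.contDiff.comp
    (hg.fderiv_right (m := 1) (by norm_num))).differentiable (by norm_num)

theorem exists_taylor_lagrange_two_segment {g : E → ℝ} (hg : Differentiable ℝ g)
    (hG : Differentiable ℝ (gradient g)) (a x : E) :
    ∃ c ∈ Ioo (0 : ℝ) 1, g x - g a - ⟪gradient g a, x - a⟫ =
      ⟪fderiv ℝ (gradient g) (a + c • (x - a)) (x - a), x - a⟫ / 2 := by
  set d := x - a
  have hline : ∀ t : ℝ, HasDerivAt (fun t : ℝ => a + t • d) d t := fun t => by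
    simpa using ((hasDerivAt_id t).smul_const d).const_add a
  obtain ⟨c, hc, h⟩ := exists_taylor_lagrange_two_unitInterval
    (f := fun t => g (a + t • d)) (f' := fun t => ⟪gradient g (a + t • d), d⟫)
    (f'' := fun t => ⟪fderiv ℝ (gradient g) (a + t • d) d, d⟫)
    (fun t => (hg _).hasGradientAt.hasFDerivAt.comp_hasDerivAt t (hline t))
    (fun t => by
      simpa using ((hG _).hasFDerivAt.comp_hasDerivAt t (hline t)).inner ℝ (hasDerivAt_const t d))
  refine ⟨c, hc, ?_⟩
  simpa [d] using h

theorem exists_two_mul_inner_sub_eq_of_gradient_eq_smul {g : E → ℝ} (hg : ContDiff ℝ 2 g) {a x θ : E} {ω : ℝ}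
    (hgx : g x = g a) (hgrad : gradient g a = ω • θ) :
    ∃ c ∈ Ioo (0 : ℝ) 1,
      2 * ω * (⟪θ, a⟫ - ⟪θ, x⟫) = ⟪fderiv ℝ (gradient g) (a + c • (x - a)) (x - a), x - a⟫ := by
  obtain ⟨c, hc, h⟩ := exists_taylor_lagrange_two_segment (hg.differentiable (by norm_num))
    hg.differentiable_gradient a x
  refine ⟨c, hc, ?_⟩
  rw [hgx, hgrad, real_inner_smul_left, inner_sub_right] at h
  linarith

end InnerProductSpace

theorem regret_sandwich_of_bounds {ω r S q N θmin θmax gmin gmax lmin lmax : ℝ}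
    (hω : 0 < ω) (hθmin : 0 < θmin) (hθlb : θmin ≤ r) (hθub : r ≤ θmax)
    (hgmin : 0 < gmin) (hgrad : gmin ≤ ω * r ∧ ω * r ≤ gmax)
    (hlmin : 0 < lmin) (hq : lmin * N ^ 2 ≤ q ∧ q ≤ lmax * N ^ 2) (hS : 2 * ω * S = q) :
    θmin * lmin / (2 * gmax) * N ^ 2 ≤ S ∧ S ≤ θmax * lmax / (2 * gmin) * N ^ 2 := by
  obtain ⟨hgmin_le, hle_gmax⟩ := hgrad
  obtain ⟨hq_lb, hq_ub⟩ := hq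
  have hgmax : 0 < gmax := hle_gmax.trans_lt' (mul_pos hω (hθmin.trans_le hθlb))
  have hN : 0 ≤ lmin * N ^ 2 := by positivity
  constructor
  · rw [div_mul_eq_mul_div, div_le_iff₀ (by positivity)]
    refine le_of_mul_le_mul_left ?_ hω
    calc ω * (θmin * lmin * N ^ 2) ≤ ω * r * (lmin * N ^ 2) := by
          nlinarith [mul_le_mul_of_nonneg_left hθlb hω.le]
      _ ≤ gmax * q := by nlinarith
      _ = ω * (S * (2 * gmax)) := by rw [← hS]; ring
  · rw [div_mul_eq_mul_div, le_div_iff₀ (by positivity)]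
    refine le_of_mul_le_mul_left ?_ hω
    calc ω * (S * (2 * gmin)) = gmin * q := by rw [← hS]; ring
      _ ≤ ω * r * (lmax * N ^ 2) := by nlinarith
      _ ≤ ω * (θmax * lmax * N ^ 2) := by nlinarith [mul_le_mul_of_nonneg_left hθub hω.le]

theorem regret_quadratic_sandwich_general {n : ℕ}
    (g : EuclideanSpace ℝ (Fin n) → ℝ) (hg : ContDiff ℝ 3 g)
    (θ : EuclideanSpace ℝ (Fin n)) (θmin θmax : ℝ)
    (hθmin : 0 < θmin) (hθlb : θmin ≤ ‖θ‖) (hθub : ‖θ‖ ≤ θmax)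
    (astar : EuclideanSpace ℝ (Fin n))
    (hbdry : g astar = 0)
    (ω : ℝ) (hω : 0 < ω) (hgrad : gradient g astar = ω • θ)
    (m' gradmin gradmax lamΔmin lamΔmax : ℝ)
    (hgradmin : 0 < gradmin)
    (hlamΔmin : 0 < lamΔmin)
    (hgradbnd : ∀ y : EuclideanSpace ℝ (Fin n), ‖y - astar‖ ≤ m' →
      gradmin ≤ ‖gradient g y‖ ∧ ‖gradient g y‖ ≤ gradmax)
    (hHess : ∀ y : EuclideanSpace ℝ (Fin n), ‖y - astar‖ ≤ m' →
      ∀ v : EuclideanSpace ℝ (Fin n),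
        lamΔmin * ‖v‖ ^ 2 ≤ ⟪fderiv ℝ (gradient g) y v, v⟫ ∧
        ⟪fderiv ℝ (gradient g) y v, v⟫ ≤ lamΔmax * ‖v‖ ^ 2)
    (φg : ℝ) (hφg : φg = gradmin / lamΔmax)
    (x : EuclideanSpace ℝ (Fin n)) (hx : g x = 0) (hxball : ‖x - astar‖ ≤ m') :
    θmin * lamΔmin / (2 * gradmax) * ‖astar - x‖ ^ 2 ≤ ⟪θ, astar⟫ - ⟪θ, x⟫ ∧
    ⟪θ, astar⟫ - ⟪θ, x⟫ ≤ θmax / (2 * φg) * ‖astar - x‖ ^ 2 := by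
  obtain ⟨c, hc, hgap⟩ :=
    exists_two_mul_inner_sub_eq_of_gradient_eq_smul (hg.of_le (by norm_num)) (hx.trans hbdry.symm) hgrad
  have hy : ‖astar + c • (x - astar) - astar‖ ≤ m' := by
    rw [add_sub_cancel_left, norm_smul, Real.norm_of_nonneg hc.1.le]
    exact (mul_le_of_le_one_left (norm_nonneg _) hc.2.le).trans hxball
  have hgradθ := hgradbnd astar (by simpa using (norm_nonneg _).trans hxball)
  rw [hgrad, norm_smul, Real.norm_of_nonneg hω.le] at hgradθ
  rw [hφg, ← mul_div_assoc, div_div_eq_mul_div, norm_sub_rev]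
  exact regret_sandwich_of_bounds hω hθmin hθlb hθub hgradmin hgradθ hlamΔmin
    (hHess _ hy (x - astar)) hgap

/-- quadratic regret sandwich. For `θ` with `0 < θmin ≤ ‖θ‖ ≤ θmax`, a
reward-maximizing action `a*(θ)` on the boundary of `𝒜 = {g ≤ 0}` whose gradient is a positive
multiple of `θ`, and gradient/Hessian bounds on the ball `B(a*(θ), m')`, every boundary point
`x` of `𝒜` in that ball satisfies
`(θmin lamΔmin/(2∇max))·‖a*(θ) − x‖² ≤ ⟪θ, a*(θ)⟫ − ⟪θ, x⟫ ≤ (θmax/(2φ_g))·‖a*(θ) − x‖²`. -/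
theorem regret_quadratic_sandwich {n : ℕ}
    (g : EuclideanSpace ℝ (Fin n) → ℝ) (hg : ContDiff ℝ 3 g)
    (κ : ℝ) (hκ : 0 < κ) (hsc : StrongConvexOn Set.univ κ g)
    (hcompact : IsCompact {x : EuclideanSpace ℝ (Fin n) | g x ≤ 0})
    (θ : EuclideanSpace ℝ (Fin n)) (θmin θmax : ℝ)
    (hθmin : 0 < θmin) (hθlb : θmin ≤ ‖θ‖) (hθub : ‖θ‖ ≤ θmax)
    (astar : EuclideanSpace ℝ (Fin n))
    (hmem : g astar ≤ 0) (hmax : ∀ b, g b ≤ 0 → ⟪θ, b⟫ ≤ ⟪θ, astar⟫)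
    (hbdry : g astar = 0)
    (ω : ℝ) (hω : 0 < ω) (hgrad : gradient g astar = ω • θ)
    (m' gradmin gradmax lamΔmin lamΔmax : ℝ)
    (hm' : 0 < m') (hgradmin : 0 < gradmin) (hgradle : gradmin ≤ gradmax)
    (hlamΔmin : 0 < lamΔmin) (hlamΔle : lamΔmin ≤ lamΔmax)
    (hgradbnd : ∀ y : EuclideanSpace ℝ (Fin n), ‖y - astar‖ ≤ m' →
      gradmin ≤ ‖gradient g y‖ ∧ ‖gradient g y‖ ≤ gradmax)
    (hHess : ∀ y : EuclideanSpace ℝ (Fin n), ‖y - astar‖ ≤ m' →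
      ∀ v : EuclideanSpace ℝ (Fin n),
        lamΔmin * ‖v‖ ^ 2 ≤ ⟪fderiv ℝ (gradient g) y v, v⟫ ∧
        ⟪fderiv ℝ (gradient g) y v, v⟫ ≤ lamΔmax * ‖v‖ ^ 2)
    (φg : ℝ) (hφg : φg = gradmin / lamΔmax)
    (x : EuclideanSpace ℝ (Fin n)) (hx : g x = 0) (hxball : ‖x - astar‖ ≤ m') :
    θmin * lamΔmin / (2 * gradmax) * ‖astar - x‖ ^ 2 ≤ ⟪θ, astar⟫ - ⟪θ, x⟫ ∧
    ⟪θ, astar⟫ - ⟪θ, x⟫ ≤ θmax / (2 * φg) * ‖astar - x‖ ^ 2 :=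
  regret_quadratic_sandwich_general g hg θ θmin θmax hθmin hθlb hθub astar hbdry ω hω hgrad m'
    gradmin gradmax lamΔmin lamΔmax hgradmin hlamΔmin hgradbnd hHess φg hφg x hx hxball
end

section
/- Let (Ω, ℱ, P) be a probability space with filtration (ℱ_s)_{s≥0}, let (a_s)_{s≥1} be an ℝⁿ-valued adapted process with ‖a_s‖ ≤ a_max almost surely, and let (x_s)_{s≥1} be ℝⁿ-valued with each x_s ℱ_{s−1}-measurable and ‖x_s‖ ≤ a_max almost surely. Suppose E[ ‖a_s − x_s‖² | ℱ_{s−1} ] ≤ nD/√s almost surely for every s ≥ 1, where D > 0. Then for every t ≥ 1, ‖ ∑_{s=1}^{t} E[ ( a_s a_sᵀ − E[a_s a_sᵀ | ℱ_{s−1}] )² ] ‖ ≤ 128 a_max² n D √t, where ‖·‖ denotes the spectral (operator 2-) norm on n×n matrices. -/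
open MeasureTheory Matrix

/-- The spectral (operator 2-) norm of a real square matrix. -/
noncomputable def specNorm {n : ℕ} (A : Matrix (Fin n) (Fin n) ℝ) : ℝ :=
  ‖Matrix.toEuclideanCLM (𝕜 := ℝ) A‖

/-- The outer product `v vᵀ` of a vector with itself, as a matrix. -/
noncomputable def outerMat {n : ℕ} (v : EuclideanSpace ℝ (Fin n)) :
    Matrix (Fin n) (Fin n) ℝ :=
  Matrix.of fun i j => v i * v j

/-! Write `Y_s = a_s a_sᵀ - E[a_s a_sᵀ | ℱ_{s-1}]`. By Jensen's inequality, submultiplicativity and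
the domination of the spectral norm by the Frobenius norm, `‖E[Y_s²]‖ ≤ ∑ᵢⱼ E[(Y_s)ᵢⱼ²]`.
Conditional expectation is the best `ℱ_{s-1}`-measurable `L²` approximation, so each
`E[(Y_s)ᵢⱼ²]` only grows when `E[a_s a_sᵀ | ℱ_{s-1}]` is replaced by `x_s x_sᵀ`, and
`‖a aᵀ - x xᵀ‖_F² ≤ 2 (‖a‖² + ‖x‖²) ‖a - x‖²`. Hence the `s`-th summand has norm at most
`4 a_max² n D / √s`, and `∑_{s ≤ t} 1 / √s ≤ 2 √t` gives the bound with `8` in place of `128`. -/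

section L2Operator

open scoped Matrix.Norms.L2Operator

theorem Matrix.l2_opNorm_sq_le_sum_sq {m n : Type*} [Fintype m] [Fintype n] [DecidableEq n]
    (A : Matrix m n ℝ) : ‖A‖ ^ 2 ≤ ∑ i, ∑ j, A i j ^ 2 := by
  have hS : 0 ≤ ∑ i, ∑ j, A i j ^ 2 := by positivity
  rw [← Real.le_sqrt (norm_nonneg _) hS, l2_opNorm_def]
  refine ContinuousLinearMap.opNorm_le_bound _ (Real.sqrt_nonneg _) fun v => ?_
  rw [← Real.sqrt_sq (norm_nonneg _), ← Real.sqrt_sq (norm_nonneg v), ← Real.sqrt_mul hS]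
  refine Real.sqrt_le_sqrt ?_
  simp only [LinearEquiv.trans_apply, LinearMap.coe_toContinuousLinearMap',
    EuclideanSpace.real_norm_sq_eq, ofLp_toLpLin, toLin'_apply, mulVec, dotProduct]
  rw [Finset.sum_mul]
  exact Finset.sum_le_sum fun i _ => Finset.sum_mul_sq_le_sq_mul_sq _ _ _

theorem specNorm_sum_le {n : ℕ} {β : Type*} (S : Finset β) (A : β → Matrix (Fin n) (Fin n) ℝ) :
    specNorm (∑ s ∈ S, A s) ≤ ∑ s ∈ S, specNorm (A s) :=
  norm_sum_le S A

variable {Ω : Type*} {mΩ : MeasurableSpace Ω} {μ : Measure Ω}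

theorem Matrix.of_integral_eq_integral {m n : Type*} [Fintype m] [Fintype n] [DecidableEq n]
    {F : Ω → Matrix m n ℝ} (hF : ∀ i j, Integrable (fun ω => F ω i j) μ) :
    (Matrix.of fun i j => ∫ ω, F ω i j ∂μ) = ∫ ω, F ω ∂μ := by
  let L := (Matrix.ofLinearEquiv ℝ (m := m) (n := n) (α := ℝ)).toContinuousLinearEquiv
  let G : Ω → m → n → ℝ := fun ω => Matrix.of.symm (F ω)
  have hG : ∀ i, Integrable (fun ω => G ω i) μ := fun i => Integrable.of_eval (hF i)
  calc (Matrix.of fun i j => ∫ ω, F ω i j ∂μ)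
      = L (∫ ω, G ω ∂μ) := by
        ext i j
        simp only [L, LinearEquiv.coe_toContinuousLinearEquiv', coe_ofLinearEquiv, of_apply]
        rw [eval_integral hG, eval_integral (f := fun ω => G ω i) (hF i)]
        rfl
    _ = ∫ ω, F ω ∂μ := (L.integral_comp_comm _).symm

theorem Matrix.norm_of_integral_sq_le_sum_integral_sq {ι : Type*} [Fintype ι] [DecidableEq ι]
    {Y : Ω → Matrix ι ι ℝ} (hY : ∀ i j, MemLp (fun ω => Y ω i j) 2 μ) :
    ‖Matrix.of fun i j => ∫ ω, (Y ω ^ 2) i j ∂μ‖ ≤ ∑ i, ∑ j, ∫ ω, Y ω i j ^ 2 ∂μ := by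
  have hsq : ∀ i j, Integrable (fun ω => (Y ω ^ 2) i j) μ := fun i j => by
    simp only [sq, mul_apply]
    exact integrable_finsetSum _ fun k _ => (hY i k).integrable_mul (hY k j)
  have hentry : ∀ i j, Integrable (fun ω => Y ω i j ^ 2) μ := fun i j => (hY i j).integrable_sq
  rw [Matrix.of_integral_eq_integral hsq]
  calc ‖∫ ω, Y ω ^ 2 ∂μ‖
      ≤ ∫ ω, ‖Y ω ^ 2‖ ∂μ := norm_integral_le_integral_norm _
    _ ≤ ∫ ω, ∑ i, ∑ j, Y ω i j ^ 2 ∂μ := by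
        refine integral_mono_of_nonneg (ae_of_all _ fun _ => norm_nonneg _)
          (integrable_finsetSum _ fun i _ => integrable_finsetSum _ fun j _ => hentry i j)
          (ae_of_all _ fun ω => ?_)
        calc ‖Y ω ^ 2‖ ≤ ‖Y ω‖ ^ 2 := by rw [sq, sq]; exact norm_mul_le _ _
          _ ≤ ∑ i, ∑ j, Y ω i j ^ 2 := l2_opNorm_sq_le_sum_sq _
    _ = ∑ i, ∑ j, ∫ ω, Y ω i j ^ 2 ∂μ := by
        rw [integral_finsetSum _ fun i _ => integrable_finsetSum _ fun j _ => hentry i j]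
        exact Finset.sum_congr rfl fun i _ => integral_finsetSum _ fun j _ => hentry i j

end L2Operator

theorem EuclideanSpace.sum_sq_mul_sub_mul_le {ι : Type*} [Fintype ι] (v w : EuclideanSpace ℝ ι) :
    ∑ i, ∑ j, (v i * v j - w i * w j) ^ 2 ≤ 2 * (‖v‖ ^ 2 + ‖w‖ ^ 2) * ‖v - w‖ ^ 2 := by
  calc ∑ i, ∑ j, (v i * v j - w i * w j) ^ 2
      ≤ ∑ i, ∑ j, (2 * (v i ^ 2 * (v j - w j) ^ 2) + 2 * ((v i - w i) ^ 2 * w j ^ 2)) := by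
        gcongr with i _ j _
        nlinarith [sq_nonneg (v i * (v j - w j) - (v i - w i) * w j)]
    _ = 2 * ((∑ i, v i ^ 2) * ∑ j, (v j - w j) ^ 2)
          + 2 * ((∑ i, (v i - w i) ^ 2) * ∑ j, w j ^ 2) := by
        rw [Finset.sum_mul_sum, Finset.sum_mul_sum]
        simp only [Finset.mul_sum, ← Finset.sum_add_distrib]
    _ = 2 * (‖v‖ ^ 2 + ‖w‖ ^ 2) * ‖v - w‖ ^ 2 := by
        simp only [EuclideanSpace.real_norm_sq_eq, PiLp.sub_apply]
        ring

theorem sum_Icc_inv_sqrt_le (t : ℕ) : ∑ s ∈ Finset.Icc 1 t, (√(s : ℝ))⁻¹ ≤ 2 * √(t : ℝ) := by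
  induction t with
  | zero => simp
  | succ t ih =>
    rw [Finset.sum_Icc_succ_top (Nat.le_add_left 1 t)]
    have hpos : 0 < √((t + 1 : ℕ) : ℝ) := Real.sqrt_pos.2 (by positivity)
    have hsq : √((t + 1 : ℕ) : ℝ) ^ 2 = √(t : ℝ) ^ 2 + 1 := by
      rw [Real.sq_sqrt (by positivity), Real.sq_sqrt (by positivity)]; push_cast; ring
    have hstep : (√((t + 1 : ℕ) : ℝ))⁻¹ ≤ 2 * (√((t + 1 : ℕ) : ℝ) - √(t : ℝ)) := by
      rw [inv_le_iff_one_le_mul₀ hpos]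
      nlinarith [Real.sqrt_nonneg (t : ℝ), sq_nonneg (√((t + 1 : ℕ) : ℝ) - √(t : ℝ))]
    linarith

namespace MeasureTheory

open ProbabilityTheory

variable {Ω : Type*} {m mΩ : MeasurableSpace Ω} {μ : Measure Ω}

theorem integral_sq_sub_condExp_le [IsFiniteMeasure μ] (hm : m ≤ mΩ) {X : Ω → ℝ}
    (hX : MemLp X 2 μ) : ∫ ω, (X ω - μ[X | m] ω) ^ 2 ∂μ ≤ ∫ ω, X ω ^ 2 ∂μ :=
  calc ∫ ω, (X ω - μ[X | m] ω) ^ 2 ∂μ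
      = ∫ ω, Var[X; μ | m] ω ∂μ := (integral_condExp hm).symm
    _ ≤ ∫ ω, μ[X ^ 2 | m] ω ∂μ :=
        integral_mono_ae integrable_condVar integrable_condExp (condVar_ae_le_condExp_sq hm hX)
    _ = ∫ ω, X ω ^ 2 ∂μ := integral_condExp hm

theorem integral_sq_sub_condExp_le_of_stronglyMeasurable [IsFiniteMeasure μ] (hm : m ≤ mΩ)
    {X Z : Ω → ℝ} (hX : MemLp X 2 μ) (hZ : MemLp Z 2 μ) (hZm : StronglyMeasurable[m] Z) :
    ∫ ω, (X ω - μ[X | m] ω) ^ 2 ∂μ ≤ ∫ ω, (X ω - Z ω) ^ 2 ∂μ := by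
  have hcond : μ[X - Z | m] =ᵐ[μ] μ[X | m] - Z := by
    filter_upwards [condExp_sub (hX.integrable one_le_two) (hZ.integrable one_le_two) m]
      with ω hω
    rw [hω, Pi.sub_apply, Pi.sub_apply,
      condExp_of_stronglyMeasurable hm hZm (hZ.integrable one_le_two)]
  calc ∫ ω, (X ω - μ[X | m] ω) ^ 2 ∂μ
      = ∫ ω, ((X - Z) ω - μ[X - Z | m] ω) ^ 2 ∂μ := by
        refine integral_congr_ae ?_
        filter_upwards [hcond] with ω hω
        rw [hω]
        simp only [Pi.sub_apply, sub_sub_sub_cancel_right]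
    _ ≤ ∫ ω, (X ω - Z ω) ^ 2 ∂μ := integral_sq_sub_condExp_le hm (hX.sub hZ)

theorem integral_le_of_ae_condExp_le [IsProbabilityMeasure μ] (hm : m ≤ mΩ) {f : Ω → ℝ} {K : ℝ}
    (hf : ∀ᵐ ω ∂μ, μ[f | m] ω ≤ K) : ∫ ω, f ω ∂μ ≤ K := by
  rw [← integral_condExp hm]
  simpa using integral_mono_ae integrable_condExp (integrable_const K) hf

end MeasureTheory

noncomputable def condCenteredOuter {n : ℕ} {Ω : Type*} {mΩ : MeasurableSpace Ω} (μ : Measure Ω)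
    (m : MeasurableSpace Ω) (a : Ω → EuclideanSpace ℝ (Fin n)) (ω : Ω) :
    Matrix (Fin n) (Fin n) ℝ :=
  outerMat (a ω) - Matrix.of fun i j => μ[fun ω' => a ω' i * a ω' j | m] ω

section ConditionalVariation

open scoped Matrix.Norms.L2Operator

variable {Ω : Type*} {m mΩ : MeasurableSpace Ω} {μ : Measure Ω}

theorem memLp_apply_mul_apply [IsFiniteMeasure μ] {ι : Type*} [Fintype ι]
    {a : Ω → EuclideanSpace ℝ ι} {C : ℝ} (ha : AEStronglyMeasurable a μ)
    (hC : ∀ᵐ ω ∂μ, ‖a ω‖ ≤ C) (i j : ι) (p : ENNReal) :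
    MemLp (fun ω => a ω i * a ω j) p μ := by
  refine MemLp.of_bound ((by fun_prop : Continuous fun v : EuclideanSpace ℝ ι => v i * v j)
    |>.comp_aestronglyMeasurable ha) (C ^ 2) ?_
  filter_upwards [hC] with ω hω
  have hi := (PiLp.norm_apply_le (a ω) i).trans hω
  rw [norm_mul, sq]
  exact mul_le_mul hi ((PiLp.norm_apply_le (a ω) j).trans hω) (norm_nonneg _)
    ((norm_nonneg _).trans hi)

theorem norm_integral_condCenteredOuter_sq_le [IsProbabilityMeasure μ] (hm : m ≤ mΩ) {n : ℕ}
    {a x : Ω → EuclideanSpace ℝ (Fin n)} {amax K : ℝ}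
    (ha : StronglyMeasurable a) (hx : StronglyMeasurable[m] x)
    (ha_le : ∀ᵐ ω ∂μ, ‖a ω‖ ≤ amax) (hx_le : ∀ᵐ ω ∂μ, ‖x ω‖ ≤ amax)
    (hdev : ∀ᵐ ω ∂μ, μ[fun ω' => ‖a ω' - x ω'‖ ^ 2 | m] ω ≤ K) :
    ‖Matrix.of fun i j => ∫ ω, (condCenteredOuter μ m a ω ^ 2) i j ∂μ‖ ≤ 4 * amax ^ 2 * K := by
  have haa := memLp_apply_mul_apply ha.aestronglyMeasurable ha_le (μ := μ)
  have hxx := memLp_apply_mul_apply (hx.mono hm).aestronglyMeasurable hx_le (μ := μ)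
  have hxxm : ∀ i j, StronglyMeasurable[m] fun ω => x ω i * x ω j := fun i j =>
    (by fun_prop : Continuous fun v : EuclideanSpace ℝ (Fin n) => v i * v j)
      |>.comp_stronglyMeasurable hx
  have hdiff : ∀ i j, Integrable (fun ω => (a ω i * a ω j - x ω i * x ω j) ^ 2) μ :=
    fun i j => ((haa i j 2).sub (hxx i j 2)).integrable_sq
  have hdev_int : Integrable (fun ω => ‖a ω - x ω‖ ^ 2) μ :=
    ((MemLp.of_bound ha.aestronglyMeasurable amax ha_le).sub
      (MemLp.of_bound (hx.mono hm).aestronglyMeasurable amax hx_le)).integrable_norm_pow'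
  calc ‖Matrix.of fun i j => ∫ ω, (condCenteredOuter μ m a ω ^ 2) i j ∂μ‖
      ≤ ∑ i, ∑ j, ∫ ω, (a ω i * a ω j - μ[fun ω' => a ω' i * a ω' j | m] ω) ^ 2 ∂μ :=
        norm_of_integral_sq_le_sum_integral_sq fun i j =>
          (haa i j 2).sub ((haa i j 2).condExp one_le_two)
    _ ≤ ∑ i, ∑ j, ∫ ω, (a ω i * a ω j - x ω i * x ω j) ^ 2 ∂μ := by
        refine Finset.sum_le_sum fun i _ => Finset.sum_le_sum fun j _ => ?_
        exact integral_sq_sub_condExp_le_of_stronglyMeasurable hm (haa i j 2) (hxx i j 2)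
          (hxxm i j)
    _ = ∫ ω, ∑ i, ∑ j, (a ω i * a ω j - x ω i * x ω j) ^ 2 ∂μ := by
        rw [integral_finsetSum _ fun i _ => integrable_finsetSum _ fun j _ => hdiff i j]
        exact Finset.sum_congr rfl fun i _ => (integral_finsetSum _ fun j _ => hdiff i j).symm
    _ ≤ ∫ ω, 4 * amax ^ 2 * ‖a ω - x ω‖ ^ 2 ∂μ := by
        refine integral_mono_ae
          (integrable_finsetSum _ fun i _ => integrable_finsetSum _ fun j _ => hdiff i j)
          (hdev_int.const_mul _) ?_
        filter_upwards [ha_le, hx_le] with ω haω hxω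
        calc ∑ i, ∑ j, (a ω i * a ω j - x ω i * x ω j) ^ 2
            ≤ 2 * (‖a ω‖ ^ 2 + ‖x ω‖ ^ 2) * ‖a ω - x ω‖ ^ 2 :=
              EuclideanSpace.sum_sq_mul_sub_mul_le _ _
          _ ≤ 2 * (amax ^ 2 + amax ^ 2) * ‖a ω - x ω‖ ^ 2 := by gcongr
          _ = 4 * amax ^ 2 * ‖a ω - x ω‖ ^ 2 := by ring
    _ = 4 * amax ^ 2 * ∫ ω, ‖a ω - x ω‖ ^ 2 ∂μ := integral_const_mul _ _
    _ ≤ 4 * amax ^ 2 * K := by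
        gcongr
        exact integral_le_of_ae_condExp_le hm hdev

end ConditionalVariation

theorem cumulative_matrix_variation_bound_general {n : ℕ} {Ω : Type*} {mΩ : MeasurableSpace Ω}
    (μ : Measure Ω) [IsProbabilityMeasure μ]
    (ℱ : Filtration ℕ mΩ)
    (amax D : ℝ) (hD : 0 < D)
    (a x : ℕ → Ω → EuclideanSpace ℝ (Fin n))
    (hameas : ∀ s, StronglyMeasurable[ℱ s] (a s))
    (hxmeas : ∀ s, 1 ≤ s → StronglyMeasurable[ℱ (s - 1)] (x s))
    (hanorm : ∀ s, ∀ᵐ ω ∂μ, ‖a s ω‖ ≤ amax)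
    (hxnorm : ∀ s, ∀ᵐ ω ∂μ, ‖x s ω‖ ≤ amax)
    (hdev : ∀ s, 1 ≤ s → ∀ᵐ ω ∂μ,
      (μ[(fun ω' => ‖a s ω' - x s ω'‖ ^ 2) | ℱ (s - 1)]) ω ≤ n * D / Real.sqrt s)
    (t : ℕ) :
    specNorm (∑ s ∈ Finset.Icc 1 t, Matrix.of fun i j =>
        ∫ ω, (((outerMat (a s ω) -
            Matrix.of fun i' j' => (μ[(fun ω' => a s ω' i' * a s ω' j') | ℱ (s - 1)]) ω) ^ 2)
          i j) ∂μ)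
      ≤ 128 * amax ^ 2 * n * D * Real.sqrt t := by
  have hstep : ∀ s ∈ Finset.Icc 1 t,
      specNorm (Matrix.of fun i j => ∫ ω, (condCenteredOuter μ (ℱ (s - 1)) (a s) ω ^ 2) i j ∂μ)
        ≤ 4 * amax ^ 2 * (n * D / √(s : ℝ)) := fun s hs =>
    norm_integral_condCenteredOuter_sq_le (ℱ.le (s - 1)) ((hameas s).mono (ℱ.le s))
      (hxmeas s (Finset.mem_Icc.1 hs).1) (hanorm s) (hxnorm s) (hdev s (Finset.mem_Icc.1 hs).1)
  calc _ ≤ _ := specNorm_sum_le _ _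
    _ ≤ ∑ s ∈ Finset.Icc 1 t, 4 * amax ^ 2 * (n * D / √(s : ℝ)) := Finset.sum_le_sum hstep
    _ = 4 * amax ^ 2 * n * D * ∑ s ∈ Finset.Icc 1 t, (√(s : ℝ))⁻¹ := by
        simp only [Finset.mul_sum, div_eq_mul_inv, mul_assoc]
    _ ≤ 4 * amax ^ 2 * n * D * (2 * √(t : ℝ)) :=
        mul_le_mul_of_nonneg_left (sum_Icc_inv_sqrt_le t) (by positivity)
    _ ≤ 128 * amax ^ 2 * n * D * √(t : ℝ) := by
        have : 0 ≤ amax ^ 2 * n * D * √(t : ℝ) := by positivity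
        linarith

/-- bounded cumulative matrix variation. If `‖a_s‖, ‖x_s‖ ≤ a_max` a.s.,
`x_s` is `ℱ_{s−1}`-measurable, and `E[‖a_s − x_s‖² | ℱ_{s−1}] ≤ nD/√s` a.s., then the spectral
norm of `∑_{s=1}^t E[(a_s a_sᵀ − E[a_s a_sᵀ | ℱ_{s−1}])²]` is at most `128 a_max² n D √t`. -/
theorem cumulative_matrix_variation_bound {n : ℕ} {Ω : Type*} {mΩ : MeasurableSpace Ω}
    (μ : Measure Ω) [IsProbabilityMeasure μ]
    (ℱ : Filtration ℕ mΩ)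
    (amax D : ℝ) (hamax : 0 < amax) (hD : 0 < D)
    (a x : ℕ → Ω → EuclideanSpace ℝ (Fin n))
    (hameas : ∀ s, StronglyMeasurable[ℱ s] (a s))
    (hxmeas : ∀ s, 1 ≤ s → StronglyMeasurable[ℱ (s - 1)] (x s))
    (hanorm : ∀ s, ∀ᵐ ω ∂μ, ‖a s ω‖ ≤ amax)
    (hxnorm : ∀ s, ∀ᵐ ω ∂μ, ‖x s ω‖ ≤ amax)
    (hdev : ∀ s, 1 ≤ s → ∀ᵐ ω ∂μ,
      (μ[(fun ω' => ‖a s ω' - x s ω'‖ ^ 2) | ℱ (s - 1)]) ω ≤ n * D / Real.sqrt s)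
    (t : ℕ) (ht : 1 ≤ t) :
    specNorm (∑ s ∈ Finset.Icc 1 t, Matrix.of fun i j =>
        ∫ ω, (((outerMat (a s ω) -
            Matrix.of fun i' j' => (μ[(fun ω' => a s ω' i' * a s ω' j') | ℱ (s - 1)]) ω) ^ 2)
          i j) ∂μ)
      ≤ 128 * amax ^ 2 * n * D * Real.sqrt t :=
  cumulative_matrix_variation_bound_general μ ℱ amax D hD a x hameas hxmeas hanorm hxnorm hdev t
end

section
/- Let θ* ∈ ℝⁿ with ‖θ*‖ ≥ θ_min > 0, let a* = a*(θ*) be the unique maximizer of ⟨θ*, ·⟩ over 𝒜 with ∇g(a*) = ω θ*, ω > 0, and assume: λ^Δ_min·I ⪯ ∇²g(y) for all y in the ball B(a*, m'); ‖∇g(a*)‖ ≤ ∇_max; ‖a‖ ≤ a_max for all a ∈ 𝒜; and there are m'' ∈ (0, m') and c_min > 0 such that the instantaneous regret r_{θ*}(a) := ⟨θ*, a* − a⟩ satisfies r_{θ*}(a) ≥ c_min whenever a ∈ 𝒜 and ‖a − a*‖ > m''. Set c₃ = min{ θ_min λ^Δ_min/(2∇_max), c_min/(4 a_max²) }. Then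 for any finite sequence of actions a₁, …, a_T ∈ 𝒜 and any z ∈ ℝⁿ with ⟨z, a*⟩ = 0 and ‖z‖ ≤ 1: zᵀ( ∑_{t=1}^{T} a_t a_tᵀ ) z ≤ c₃⁻¹ · ∑_{t=1}^{T} r_{θ*}(a_t). -/
/-!
Write `r(b) = ⟪θ, a*⟫ - ⟪θ, b⟫` and `h = b - a*` for an action `b`. If `‖h‖ ≤ m''`, a second-order
Taylor expansion of `g` at `a*` along `h`, together with `g b ≤ 0 = g a*` and `∇g(a*) = ωθ`, gives
`λ/2 ‖h‖² ≤ ω r(b)`; since `ω θmin ≤ ‖∇g(a*)‖ ≤ ∇max`, this is `r(b) ≥ θmin λ / (2 ∇max) ‖h‖²`, and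
`⟪z, b⟫ = ⟪z, h⟫` because `z ⟂ a*`. Otherwise `r(b) ≥ cmin` while `⟪z, b⟫² ≤ amax²`. In both cases
`c₃ ⟪z, b⟫² ≤ r(b)`, and the quadratic form `zᵀ(∑ a_t a_tᵀ)z` is `∑ ⟪z, a_t⟫²`.
-/

open RealInnerProductSpace Matrix

open Set in
theorem add_add_half_le_of_le_deriv2 {f f' f'' : ℝ → ℝ} {c : ℝ}
    (hf : ∀ t, HasDerivAt f (f' t) t) (hf' : ∀ t, HasDerivAt f' (f'' t) t)
    (hc : ∀ t ∈ Ioo (0 : ℝ) 1, c ≤ f'' t) :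
    f 0 + f' 0 + c / 2 ≤ f 1 := by
  have mono {u u' : ℝ → ℝ} (hu : ∀ t, HasDerivAt u (u' t) t)
      (hu' : ∀ t ∈ Ioo (0 : ℝ) 1, 0 ≤ u' t) : MonotoneOn u (Icc 0 1) :=
    monotoneOn_of_hasDerivWithinAt_nonneg (convex_Icc 0 1)
      (fun t _ => (hu t).continuousAt.continuousWithinAt)
      (fun t _ => (hu t).hasDerivWithinAt) (by simpa using hu')
  have h0 : (0 : ℝ) ∈ Icc 0 1 := left_mem_Icc.2 zero_le_one
  have slope : ∀ t ∈ Ioo (0 : ℝ) 1, f' 0 + c * t ≤ f' t := fun t ht => by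
    have := mono (u := fun s => f' s - c * s) (u' := fun s => f'' s - c)
      (fun s => by simpa using (hf' s).fun_sub ((hasDerivAt_id' s).const_mul c))
      (fun s hs => sub_nonneg.2 (hc s hs)) h0 (Ioo_subset_Icc_self ht) ht.1.le
    simp only [mul_zero, sub_zero] at this
    linarith
  have := mono (u := fun s => f s - s * f' 0 - c / 2 * s ^ 2) (u' := fun s => f' s - f' 0 - c * s)
    (fun s => ((hf s).fun_sub ((hasDerivAt_id' s).mul_const (f' 0))).fun_sub
        ((hasDerivAt_pow 2 s).const_mul (c / 2)) |>.congr_deriv (by ring))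
    (fun s hs => by linarith [slope s hs]) h0 (right_mem_Icc.2 zero_le_one) zero_le_one
  simp only at this
  linarith

section InnerProductSpace

variable {E : Type*} [NormedAddCommGroup E] [InnerProductSpace ℝ E]

theorem sq_inner_le_sq_norm_right {z b : E} (hz : ‖z‖ ≤ 1) : ⟪z, b⟫ ^ 2 ≤ ‖b‖ ^ 2 := by
  rw [← sq_abs]
  gcongr
  calc |⟪z, b⟫| ≤ ‖z‖ * ‖b‖ := abs_real_inner_le_norm z b
    _ ≤ ‖b‖ := mul_le_of_le_one_left (norm_nonneg b) hz

variable [CompleteSpace E]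

theorem ContDiff.gradient {f : E → ℝ} {k : WithTop ℕ∞} (hf : ContDiff ℝ (k + 1) f) :
    ContDiff ℝ k (gradient f) :=
  (InnerProductSpace.toDual ℝ E).symm.contDiff.comp (hf.fderiv_right le_rfl)

theorem add_inner_gradient_add_half_mul_le {f : E → ℝ} (hf : ContDiff ℝ 2 f) {x h : E} {c : ℝ}
    (hc : ∀ t ∈ Set.Ioo (0 : ℝ) 1, c * ‖h‖ ^ 2 ≤ ⟪fderiv ℝ (gradient f) (x + t • h) h, h⟫) :
    f x + ⟪gradient f x, h⟫ + c / 2 * ‖h‖ ^ 2 ≤ f (x + h) := by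
  have hline (t : ℝ) : HasDerivAt (fun s : ℝ => x + s • h) h t := by
    simpa using ((hasDerivAt_id t).smul_const h).const_add x
  have hf' : Differentiable ℝ f := hf.differentiable (by norm_num)
  have hg' : Differentiable ℝ (gradient f) := (hf.gradient (k := 1)).differentiable one_ne_zero
  have := add_add_half_le_of_le_deriv2 (c := c * ‖h‖ ^ 2) (f := fun t => f (x + t • h))
    (f' := fun t => ⟪gradient f (x + t • h), h⟫)
    (fun t => by
      have := (hf' _).hasGradientAt.hasFDerivAt.comp_hasDerivAt t (hline t)
      rwa [InnerProductSpace.toDual_apply_apply] at this)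
    (fun t => by
      simpa using
        ((hg' _).hasFDerivAt.comp_hasDerivAt t (hline t)).inner ℝ (hasDerivAt_const t h))
    hc
  simp only [zero_smul, add_zero, one_smul] at this
  linarith

theorem half_mul_norm_sub_sq_le_inner_gradient_sub {f : E → ℝ} (hf : ContDiff ℝ 2 f)
    {x b : E} {c r : ℝ}
    (hc : ∀ y, ‖y - x‖ ≤ r → ∀ v, c * ‖v‖ ^ 2 ≤ ⟪fderiv ℝ (gradient f) y v, v⟫)
    (hbr : ‖b - x‖ ≤ r) (hb : f b ≤ f x) :
    c / 2 * ‖b - x‖ ^ 2 ≤ ⟪gradient f x, x - b⟫ := by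
  have := add_inner_gradient_add_half_mul_le hf (x := x) (h := b - x) (c := c) fun t ht => by
    refine hc _ (le_trans ?_ hbr) _
    rw [add_sub_cancel_left, norm_smul, Real.norm_of_nonneg ht.1.le]
    exact mul_le_of_le_one_left (norm_nonneg _) ht.2.le
  rw [add_sub_cancel] at this
  rw [← neg_sub b x, inner_neg_right]
  linarith

theorem mul_norm_sub_sq_le_inner_sub_of_gradient_eq_smul {f : E → ℝ} (hf : ContDiff ℝ 2 f)
    {x b θ : E} {ω θmin G c r : ℝ} (hω : 0 < ω) (hgrad : gradient f x = ω • θ)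
    (hθmin : 0 ≤ θmin) (hθ : θmin ≤ ‖θ‖) (hG : 0 < G) (hgradG : ‖gradient f x‖ ≤ G)
    (hc₀ : 0 ≤ c) (hc : ∀ y, ‖y - x‖ ≤ r → ∀ v, c * ‖v‖ ^ 2 ≤ ⟪fderiv ℝ (gradient f) y v, v⟫)
    (hbr : ‖b - x‖ ≤ r) (hb : f b ≤ f x) :
    θmin * c / (2 * G) * ‖b - x‖ ^ 2 ≤ ⟪θ, x⟫ - ⟪θ, b⟫ := by
  have hcurv := half_mul_norm_sub_sq_le_inner_gradient_sub hf hc hbr hb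
  rw [hgrad, real_inner_smul_left, inner_sub_right] at hcurv
  have hregret : 0 ≤ ⟪θ, x⟫ - ⟪θ, b⟫ :=
    (mul_nonneg_iff_of_pos_left hω).1 (le_trans (by positivity) hcurv)
  have hωθ : ω * θmin ≤ G := calc
    ω * θmin ≤ ‖ω • θ‖ := by rw [norm_smul_of_nonneg hω.le]; gcongr
    _ ≤ G := hgrad ▸ hgradG
  rw [div_mul_eq_mul_div, div_le_iff₀ (by positivity)]
  nlinarith [mul_le_mul_of_nonneg_left hcurv hθmin, mul_le_mul_of_nonneg_right hωθ hregret]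

end InnerProductSpace

theorem dotProduct_sum_vecMulVec_mulVec {ι m : Type*} [Fintype m]
    (s : Finset ι) (a : ι → EuclideanSpace ℝ m) (z : EuclideanSpace ℝ m) :
    (fun i => z i) ⬝ᵥ (∑ t ∈ s, vecMulVec (fun i => a t i) (fun i => a t i)) *ᵥ (fun i => z i)
      = ∑ t ∈ s, ⟪z, a t⟫ ^ 2 := by
  simp [sum_mulVec, vecMulVec_mulVec, dotProduct_sum, EuclideanSpace.inner_eq_star_dotProduct,
    dotProduct_comm, sq]

theorem design_matrix_bounded_by_regret_general {n : ℕ}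
    (g : EuclideanSpace ℝ (Fin n) → ℝ) (hg : ContDiff ℝ 3 g)
    (θ : EuclideanSpace ℝ (Fin n)) (θmin : ℝ) (hθmin : 0 < θmin) (hθlb : θmin ≤ ‖θ‖)
    (astar : EuclideanSpace ℝ (Fin n))
    (hbdry : g astar = 0)
    (ω : ℝ) (hω : 0 < ω) (hgrad : gradient g astar = ω • θ)
    (m' gradmax lamΔmin amax : ℝ) (hgradmax : 0 < gradmax)
    (hlamΔmin : 0 < lamΔmin) (hamax : 0 < amax)
    (hHess : ∀ y : EuclideanSpace ℝ (Fin n), ‖y - astar‖ ≤ m' →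
      ∀ v : EuclideanSpace ℝ (Fin n),
        lamΔmin * ‖v‖ ^ 2 ≤ ⟪fderiv ℝ (gradient g) y v, v⟫)
    (hgradbnd : ‖gradient g astar‖ ≤ gradmax)
    (hanorm : ∀ a : EuclideanSpace ℝ (Fin n), g a ≤ 0 → ‖a‖ ≤ amax)
    (m'' cmin : ℝ) (hm'' : m'' < m') (hcmin : 0 < cmin)
    (hgap : ∀ a : EuclideanSpace ℝ (Fin n), g a ≤ 0 → m'' < ‖a - astar‖ →
      cmin ≤ ⟪θ, astar⟫ - ⟪θ, a⟫)
    (c₃ : ℝ) (hc₃ : c₃ = min (θmin * lamΔmin / (2 * gradmax)) (cmin / (4 * amax ^ 2)))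
    (T : ℕ) (a : ℕ → EuclideanSpace ℝ (Fin n)) (ha : ∀ t ∈ Finset.Icc 1 T, g (a t) ≤ 0)
    (z : EuclideanSpace ℝ (Fin n)) (hzperp : ⟪z, astar⟫ = 0) (hz : ‖z‖ ≤ 1) :
    (fun i => z i) ⬝ᵥ
        (∑ t ∈ Finset.Icc 1 T,
          Matrix.vecMulVec (fun i => a t i) (fun i => a t i)).mulVec (fun i => z i)
      ≤ c₃⁻¹ * ∑ t ∈ Finset.Icc 1 T, (⟪θ, astar⟫ - ⟪θ, a t⟫) := by
  have hc₃pos : 0 < c₃ := hc₃ ▸ lt_min (by positivity) (by positivity)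
  have key (b) (hb : g b ≤ 0) : c₃ * ⟪z, b⟫ ^ 2 ≤ ⟪θ, astar⟫ - ⟪θ, b⟫ := by
    rcases le_or_gt ‖b - astar‖ m'' with hnear | hfar
    · calc c₃ * ⟪z, b⟫ ^ 2 ≤ θmin * lamΔmin / (2 * gradmax) * ‖b - astar‖ ^ 2 := by
            gcongr ?_ * ?_
            · exact hc₃ ▸ min_le_left _ _
            · simpa [inner_sub_right, hzperp] using sq_inner_le_sq_norm_right (b := b - astar) hz
        _ ≤ ⟪θ, astar⟫ - ⟪θ, b⟫ :=
          mul_norm_sub_sq_le_inner_sub_of_gradient_eq_smul (hg.of_le (by norm_num)) hω hgrad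
            hθmin.le hθlb hgradmax hgradbnd hlamΔmin.le hHess (hnear.trans hm''.le)
            (hb.trans hbdry.ge)
    · calc c₃ * ⟪z, b⟫ ^ 2 ≤ cmin / (4 * amax ^ 2) * amax ^ 2 := by
            gcongr ?_ * ?_
            · exact hc₃ ▸ min_le_right _ _
            · exact (sq_inner_le_sq_norm_right hz).trans (by gcongr; exact hanorm b hb)
        _ ≤ cmin := by field_simp; linarith
        _ ≤ ⟪θ, astar⟫ - ⟪θ, b⟫ := hgap b hb hfar
  rw [dotProduct_sum_vecMulVec_mulVec, Finset.mul_sum]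
  gcongr with t ht
  rw [le_inv_mul_iff₀ hc₃pos]
  exact key _ (ha t ht)

/-- inference is bounded by cumulative regret. Under the stated curvature,
gradient, boundedness and regret-gap hypotheses, for any finite sequence of actions
`a₁, …, a_T ∈ 𝒜` and any `z ⟂ a*(θ*)` with `‖z‖ ≤ 1`,
`zᵀ(∑_t a_t a_tᵀ)z ≤ c₃⁻¹ ∑_t r_{θ*}(a_t)`. -/
theorem design_matrix_bounded_by_regret {n : ℕ}
    (g : EuclideanSpace ℝ (Fin n) → ℝ) (hg : ContDiff ℝ 3 g)
    (κ : ℝ) (hκ : 0 < κ) (hsc : StrongConvexOn Set.univ κ g)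
    (hcompact : IsCompact {x : EuclideanSpace ℝ (Fin n) | g x ≤ 0})
    (θ : EuclideanSpace ℝ (Fin n)) (θmin : ℝ) (hθmin : 0 < θmin) (hθlb : θmin ≤ ‖θ‖)
    (astar : EuclideanSpace ℝ (Fin n))
    (hmem : g astar ≤ 0) (hmax : ∀ b, g b ≤ 0 → ⟪θ, b⟫ ≤ ⟪θ, astar⟫)
    (huniq : ∀ a', (g a' ≤ 0 ∧ ∀ b, g b ≤ 0 → ⟪θ, b⟫ ≤ ⟪θ, a'⟫) → a' = astar)
    (hbdry : g astar = 0)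
    (ω : ℝ) (hω : 0 < ω) (hgrad : gradient g astar = ω • θ)
    (m' gradmax lamΔmin amax : ℝ) (hm' : 0 < m') (hgradmax : 0 < gradmax)
    (hlamΔmin : 0 < lamΔmin) (hamax : 0 < amax)
    (hHess : ∀ y : EuclideanSpace ℝ (Fin n), ‖y - astar‖ ≤ m' →
      ∀ v : EuclideanSpace ℝ (Fin n),
        lamΔmin * ‖v‖ ^ 2 ≤ ⟪fderiv ℝ (gradient g) y v, v⟫)
    (hgradbnd : ‖gradient g astar‖ ≤ gradmax)
    (hanorm : ∀ a : EuclideanSpace ℝ (Fin n), g a ≤ 0 → ‖a‖ ≤ amax)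
    (m'' cmin : ℝ) (hm''0 : 0 < m'') (hm'' : m'' < m') (hcmin : 0 < cmin)
    (hgap : ∀ a : EuclideanSpace ℝ (Fin n), g a ≤ 0 → m'' < ‖a - astar‖ →
      cmin ≤ ⟪θ, astar⟫ - ⟪θ, a⟫)
    (c₃ : ℝ) (hc₃ : c₃ = min (θmin * lamΔmin / (2 * gradmax)) (cmin / (4 * amax ^ 2)))
    (T : ℕ) (a : ℕ → EuclideanSpace ℝ (Fin n)) (ha : ∀ t ∈ Finset.Icc 1 T, g (a t) ≤ 0)
    (z : EuclideanSpace ℝ (Fin n)) (hzperp : ⟪z, astar⟫ = 0) (hz : ‖z‖ ≤ 1) :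
    (fun i => z i) ⬝ᵥ
        (∑ t ∈ Finset.Icc 1 T,
          Matrix.vecMulVec (fun i => a t i) (fun i => a t i)).mulVec (fun i => z i)
      ≤ c₃⁻¹ * ∑ t ∈ Finset.Icc 1 T, (⟪θ, astar⟫ - ⟪θ, a t⟫) :=
  design_matrix_bounded_by_regret_general g hg θ θmin hθmin hθlb astar hbdry ω hω hgrad m' gradmax
    lamΔmin amax hgradmax hlamΔmin hamax hHess hgradbnd hanorm m'' cmin hm'' hcmin hgap c₃ hc₃ T a
    ha z hzperp hz
end

section
/- Let n ≥ 1, let Φ₁ be any real n×n matrix, and let Φ₂ be a real symmetric positive definite n×n matrix. Then Tr(Φ₂) · Tr(Φ₁ᵀ Φ₂⁻¹ Φ₁) ≥ (Tr Φ₁)² / n. -/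
/-!
With `S = Φ₂^{1/2}` (symmetric and invertible), `Tr Φ₁ = Tr (Sᵀ (S⁻¹ Φ₁))` is the Frobenius inner
product of `S` and `S⁻¹ Φ₁`, so Cauchy–Schwarz gives
`(Tr Φ₁)² ≤ Tr (Sᵀ S) · Tr ((S⁻¹ Φ₁)ᵀ (S⁻¹ Φ₁)) = Tr Φ₂ · Tr (Φ₁ᵀ Φ₂⁻¹ Φ₁)`,
which is the claim even without the factor `1 / n`.
-/

open Matrix
open scoped MatrixOrder

namespace Matrix

variable {R m n : Type*} [Fintype m] [Fintype n]

theorem trace_transpose_mul_sq_le [CommRing R] [LinearOrder R] [IsStrictOrderedRing R]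
    (A B : Matrix m n R) : (Aᵀ * B).trace ^ 2 ≤ (Aᵀ * A).trace * (Bᵀ * B).trace := by
  simpa only [← vec_dotProduct_vec, dotProduct, sq] using
    Finset.sum_mul_sq_le_sq_mul_sq Finset.univ (vec A) (vec B)

theorem PosDef.trace_sq_le_trace_mul_trace_transpose_mul_inv_mul [DecidableEq n]
    {P : Matrix n n ℝ} (hP : P.PosDef) (A : Matrix n n ℝ) :
    A.trace ^ 2 ≤ P.trace * (Aᵀ * P⁻¹ * A).trace := by
  set S := CFC.sqrt P
  have hS : Sᵀ = S := (CFC.sqrt_nonneg P).posSemidef.isHermitian.eq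
  have hSS : S * S = P := CFC.sqrt_mul_sqrt_self P
  have hSinv : S * S⁻¹ = 1 :=
    mul_nonsing_inv S <| (isUnit_iff_isUnit_det S).mp <| (CFC.isUnit_sqrt_iff P).mpr hP.isUnit
  have hPinv : P⁻¹ = S⁻¹ * S⁻¹ := by rw [← hSS, mul_inv_rev]
  calc A.trace ^ 2 = (Sᵀ * (S⁻¹ * A)).trace ^ 2 := by
        rw [hS, ← Matrix.mul_assoc, hSinv, Matrix.one_mul]
    _ ≤ (Sᵀ * S).trace * ((S⁻¹ * A)ᵀ * (S⁻¹ * A)).trace := trace_transpose_mul_sq_le _ _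
    _ = P.trace * (Aᵀ * P⁻¹ * A).trace := by
        rw [hS, hSS, transpose_mul, transpose_nonsing_inv, hS, hPinv]
        simp only [Matrix.mul_assoc]

end Matrix

theorem trace_inv_trace_lower_bound_general {n : ℕ}
    (Φ₁ Φ₂ : Matrix (Fin n) (Fin n) ℝ) (hΦ₂ : Φ₂.PosDef) :
    (Φ₁.trace) ^ 2 / n ≤ Φ₂.trace * (Φ₁ᵀ * Φ₂⁻¹ * Φ₁).trace :=
  (div_nat_le_self_of_nonnneg (sq_nonneg _) n).trans
    (hΦ₂.trace_sq_le_trace_mul_trace_transpose_mul_inv_mul Φ₁)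

/-- For Φ₁ arbitrary and Φ₂ symmetric positive definite,
`Tr(Φ₂) · Tr(Φ₁ᵀ Φ₂⁻¹ Φ₁) ≥ (Tr Φ₁)² / n`. -/
theorem trace_inv_trace_lower_bound {n : ℕ} (hn : 1 ≤ n)
    (Φ₁ Φ₂ : Matrix (Fin n) (Fin n) ℝ) (hΦ₂ : Φ₂.PosDef) :
    (Φ₁.trace) ^ 2 / n ≤ Φ₂.trace * (Φ₁ᵀ * Φ₂⁻¹ * Φ₁).trace :=
  trace_inv_trace_lower_bound_general Φ₁ Φ₂ hΦ₂
end

section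
/- Let w₁, w₂ ∈ ℝⁿ be unit vectors with ⟨w₁, w₂⟩ ≥ 0, and let η > 0. If x ∈ ℝⁿ satisfies ⟨w₁, x⟩ + η‖x‖² ≤ 0 and ⟨w₂, x⟩ ≥ 0, then ‖x‖ ≤ (1/η) · √(1 − ⟨w₁, w₂⟩²). -/
open RealInnerProductSpace

/-- If `w₁, w₂` are unit vectors with nonnegative inner product, `η > 0`, and
`x` satisfies `⟪w₁, x⟫ + η‖x‖² ≤ 0` and `⟪w₂, x⟫ ≥ 0`, then
`‖x‖ ≤ (1/η)·√(1 − ⟪w₁,w₂⟫²)`. -/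
theorem norm_le_of_two_constraints {n : ℕ}
    (w₁ w₂ x : EuclideanSpace ℝ (Fin n)) (η : ℝ)
    (hw₁ : ‖w₁‖ = 1) (hw₂ : ‖w₂‖ = 1) (hww : 0 ≤ ⟪w₁, w₂⟫) (hη : 0 < η)
    (h₁ : ⟪w₁, x⟫ + η * ‖x‖ ^ 2 ≤ 0) (h₂ : 0 ≤ ⟪w₂, x⟫) :
    ‖x‖ ≤ (1 / η) * Real.sqrt (1 - ⟪w₁, w₂⟫ ^ 2) := by
  set c : ℝ := ⟪w₁, w₂⟫ with hc
  set v : EuclideanSpace ℝ (Fin n) := w₁ - c • w₂ with hv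
  have hnormv2 : ‖v‖ ^ 2 = 1 - c ^ 2 := by
    have : ‖v‖ ^ 2 = ⟪v, v⟫ := (real_inner_self_eq_norm_sq v).symm
    rw [this, hv]
    simp only [inner_sub_sub_self, real_inner_smul_left, real_inner_smul_right,
      inner_smul_left, inner_smul_right]
    have h1 : ⟪w₁, w₁⟫ = (1:ℝ) := by
      rw [real_inner_self_eq_norm_sq, hw₁]; norm_num
    have h2 : ⟪w₂, w₂⟫ = (1:ℝ) := by
      rw [real_inner_self_eq_norm_sq, hw₂]; norm_num
    have h3 : ⟪w₂, w₁⟫ = c := by rw [real_inner_comm]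
    rw [h1, h2, h3]
    ring
  have hnormv : ‖v‖ = Real.sqrt (1 - c ^ 2) := by
    rw [← hnormv2, Real.sqrt_sq (norm_nonneg v)]
  have key : -(Real.sqrt (1 - c ^ 2) * ‖x‖) ≤ ⟪w₁, x⟫ := by
    have hdecomp : ⟪w₁, x⟫ = c * ⟪w₂, x⟫ + ⟪v, x⟫ := by
      rw [hv, inner_sub_left, real_inner_smul_left]; ring
    have hcauchy : -(‖v‖ * ‖x‖) ≤ ⟪v, x⟫ := neg_le_of_abs_le (abs_real_inner_le_norm v x)
    have : 0 ≤ c * ⟪w₂, x⟫ := mul_nonneg hww h₂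
    rw [hdecomp, ← hnormv]
    linarith
  have hstep : η * ‖x‖ ^ 2 ≤ Real.sqrt (1 - c ^ 2) * ‖x‖ := by linarith
  rcases eq_or_lt_of_le (norm_nonneg x) with h0 | h0
  · rw [← h0]
    positivity
  · rw [div_mul_eq_mul_div, le_div_iff₀ hη]
    nlinarith [mul_pos hη h0]
end

section
/- Let θ₁, θ₂ ∈ ℝⁿ with θ₁ ≠ 0, and suppose ‖θ₁ − θ₂‖ ≤ m for some m with 0 < m < ‖θ₁‖ (so in particular θ₂ ≠ 0). Then ⟨θ₁/‖θ₁‖, θ₂/‖θ₂‖⟩ ≥ (‖θ₁‖ − m)/(‖θ₁‖ + m). -/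
open RealInnerProductSpace

/-- If `θ₁ ≠ 0` and `‖θ₁ − θ₂‖ ≤ m < ‖θ₁‖`, then the cosine of the angle
between `θ₁` and `θ₂` is at least `(‖θ₁‖ − m)/(‖θ₁‖ + m)`. -/
theorem cos_angle_lower_bound {n : ℕ}
    (θ₁ θ₂ : EuclideanSpace ℝ (Fin n)) (m : ℝ)
    (hθ₁ : θ₁ ≠ 0) (hm0 : 0 < m) (hm : m < ‖θ₁‖) (hdist : ‖θ₁ - θ₂‖ ≤ m) :
    (‖θ₁‖ - m) / (‖θ₁‖ + m) ≤ ⟪‖θ₁‖⁻¹ • θ₁, ‖θ₂‖⁻¹ • θ₂⟫ := by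
  set a := ‖θ₁‖ with ha
  set b := ‖θ₂‖ with hb
  set d := ‖θ₁ - θ₂‖ with hd
  have ha0 : 0 < a := lt_trans hm0 hm
  have habs : |a - b| ≤ d := abs_norm_sub_norm_le θ₁ θ₂
  have hb1 : a - m ≤ b := by
    have := abs_le.mp habs
    linarith
  have hb0 : 0 < b := by linarith
  have hd0 : 0 ≤ d := norm_nonneg _
  have hexp : d ^ 2 = a ^ 2 - 2 * ⟪θ₁, θ₂⟫ + b ^ 2 := by
    rw [hd, ha, hb]
    have := @norm_sub_sq_real (EuclideanSpace ℝ (Fin n)) _ _ θ₁ θ₂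
    nlinarith [this]
  have hkey : (a - m) * (a * b) ≤ ⟪θ₁, θ₂⟫ * (a + m) := by
    have h1 : 0 ≤ (⟪θ₁, θ₂⟫ * (a + m) - (a - m) * (a * b)) * (2 * (a + m)) := by
      nlinarith [sq_nonneg ((a + m) * b - a * (a - m)),
        mul_nonneg (mul_nonneg (by linarith : (0:ℝ) ≤ m - d) (by linarith : (0:ℝ) ≤ m + d))
          (by positivity : (0:ℝ) ≤ (a + m) ^ 2),
        mul_nonneg (by linarith : (0:ℝ) ≤ a - m)
          (by positivity : (0:ℝ) ≤ 4 * a ^ 2 * m + 3 * a * m ^ 2 + m ^ 3)]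
    nlinarith [h1]
  rw [real_inner_smul_left, real_inner_smul_right,
    show a⁻¹ * (b⁻¹ * ⟪θ₁, θ₂⟫) = ⟪θ₁, θ₂⟫ / (a * b) by
      rw [div_eq_mul_inv, mul_inv]; ring]
  rw [div_le_div_iff₀ (by linarith) (by positivity)]
  linarith
end

section
/- Let θ₁, θ₂ ∈ ℝⁿ be nonzero vectors and write θ̂ᵢ = θᵢ/‖θᵢ‖. Then 1 − ⟨θ̂₁, θ̂₂⟩² ≤ ‖θ₁ − θ₂‖² · (‖θ₁‖ + ‖θ₂‖)² / ( 4 ‖θ₁‖² ‖θ₂‖² ). -/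
/-!
By the law of cosines, `‖x - y‖² - (‖x‖ - ‖y‖)² = 2(‖x‖‖y‖ - ⟪x, y⟫)` and
`(‖x‖ + ‖y‖)² - ‖x - y‖² = 2(‖x‖‖y‖ + ⟪x, y⟫)`, so the squared sine of the angle is
`(d² - (‖x‖ - ‖y‖)²)((‖x‖ + ‖y‖)² - d²) / (4‖x‖²‖y‖²)` with `d = ‖x - y‖`. Dropping the
subtracted terms only increases the numerator, because `(‖x‖ - ‖y‖)² ≤ d²` by the reverse
triangle inequality.
-/

open RealInnerProductSpace

theorem one_sub_inner_normalize_sq_eq {E : Type*} [NormedAddCommGroup E] [InnerProductSpace ℝ E]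
    {x y : E} (hx : x ≠ 0) (hy : y ≠ 0) :
    1 - ⟪‖x‖⁻¹ • x, ‖y‖⁻¹ • y⟫ ^ 2 =
      (‖x - y‖ ^ 2 - (‖x‖ - ‖y‖) ^ 2) * ((‖x‖ + ‖y‖) ^ 2 - ‖x - y‖ ^ 2) /
        (4 * ‖x‖ ^ 2 * ‖y‖ ^ 2) := by
  have hx' : ‖x‖ ≠ 0 := norm_ne_zero_iff.mpr hx
  have hy' : ‖y‖ ≠ 0 := norm_ne_zero_iff.mpr hy
  rw [real_inner_smul_left, real_inner_smul_right, norm_sub_sq_real]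
  field_simp
  ring

theorem sub_mul_sub_le_mul {p q u : ℝ} (hp : 0 ≤ p) (hq : 0 ≤ q) (hpu : p ≤ u) :
    (u - p) * (q - u) ≤ u * q := by
  -- `u * q - (u - p) * (q - u) = u * (u - p) + p * q`
  nlinarith [mul_nonneg (hp.trans hpu) (sub_nonneg.mpr hpu), mul_nonneg hp hq]

/-- For nonzero `θ₁, θ₂`, the squared sine of the angle between them satisfies
`1 − ⟪θ̂₁, θ̂₂⟫² ≤ ‖θ₁ − θ₂‖²(‖θ₁‖ + ‖θ₂‖)²/(4‖θ₁‖²‖θ₂‖²)`. -/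
theorem sin_sq_angle_upper_bound {n : ℕ}
    (θ₁ θ₂ : EuclideanSpace ℝ (Fin n)) (h₁ : θ₁ ≠ 0) (h₂ : θ₂ ≠ 0) :
    1 - ⟪‖θ₁‖⁻¹ • θ₁, ‖θ₂‖⁻¹ • θ₂⟫ ^ 2 ≤
      ‖θ₁ - θ₂‖ ^ 2 * (‖θ₁‖ + ‖θ₂‖) ^ 2 / (4 * ‖θ₁‖ ^ 2 * ‖θ₂‖ ^ 2) := by
  have hdist : (‖θ₁‖ - ‖θ₂‖) ^ 2 ≤ ‖θ₁ - θ₂‖ ^ 2 :=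
    sq_le_sq.mpr (by simpa using abs_norm_sub_norm_le θ₁ θ₂)
  rw [one_sub_inner_normalize_sq_eq h₁ h₂]
  exact div_le_div_of_nonneg_right (sub_mul_sub_le_mul (sq_nonneg _) (sq_nonneg _) hdist)
    (by positivity)
end
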